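/- There exists ℓ₀ ∈ ℕ such that for every integer ℓ ≥ ℓ₀, every μ > 0, every c > 0, and every measurable G : ℝ → ℂ with |G(p)| ≤ c·(1+p²)^{−ℓ} for all p ∈ ℝ, the function (θ₁, θ₂) ↦ cosh²((θ₁ − θ₂)/2) · |G(μ cosh θ₁ − μ cosh θ₂)|² · (1 + cosh θ₂)^{−2ℓ} is integrable on ℝ². -/

import Mathlib

open MeasureTheory Real

/-! The integrand is dominated by a constant times `(1 + cosh θ₁)⁻¹ (1 + cosh θ₂)⁻¹`, which is
integrable on `ℝ²` because `1 + x² ≤ 4 cosh x`. For the domination, first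
`cosh² ((θ₁ - θ₂) / 2) ≤ (1 + cosh θ₁) (1 + cosh θ₂)`. The extra factor `1 + cosh θ₁` is then
traded for the weight: with `D = μ cosh θ₁ - μ cosh θ₂` one has `2 |D| ≤ 1 + D²`, so
`1 + cosh θ₁ ≲ (1 + cosh θ₂) (1 + D²)`, and for `ℓ ≥ 2` the decay `|G D| ≤ c (1 + D²)^{-ℓ}` and
the weight `(1 + cosh θ₂)^{-2ℓ}` absorb the resulting powers of `1 + D²` and `1 + cosh θ₂`. -/

lemma one_add_sq_le_four_mul_cosh (x : ℝ) : 1 + x ^ 2 ≤ 4 * cosh x := by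
  rw [← cosh_abs, cosh_eq, ← sq_abs]
  have := quadratic_le_exp_of_nonneg (abs_nonneg x)
  have := add_one_le_exp (-|x|)
  nlinarith

lemma integrable_inv_one_add_cosh : Integrable fun x : ℝ => (1 + cosh x)⁻¹ := by
  refine (integrable_inv_one_add_sq.const_mul 4).mono' (by fun_prop) (ae_of_all _ fun x => ?_)
  have hcosh := one_le_cosh x
  rw [norm_inv, norm_of_nonneg (by linarith), ← div_eq_mul_inv, ← inv_div]
  exact inv_anti₀ (by positivity) (by linarith [one_add_sq_le_four_mul_cosh x])

lemma cosh_sub_le_two_mul_cosh_mul_cosh (u v : ℝ) : cosh (u - v) ≤ 2 * cosh u * cosh v := by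
  have := cosh_pos (u + v)
  rw [cosh_add] at this
  rw [cosh_sub]
  linarith

lemma cosh_half_sub_sq_le (u v : ℝ) :
    cosh ((u - v) / 2) ^ 2 ≤ (1 + cosh u) * (1 + cosh v) := by
  have half : 2 * cosh ((u - v) / 2) ^ 2 = 1 + cosh (u - v) := by
    rw [← mul_div_cancel₀ (u - v) two_ne_zero, cosh_two_mul, sinh_sq]; ring_nf
  nlinarith [cosh_sub_le_two_mul_cosh_mul_cosh u v, one_le_cosh u, one_le_cosh v]

lemma one_add_le_mul_one_add_mul_one_add_sq {μ x y : ℝ} (hμ : 0 < μ) (hy : 0 ≤ y) :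
    1 + x ≤ (1 + 1 / (2 * μ)) * ((1 + y) * (1 + (μ * x - μ * y) ^ 2)) := by
  set Q := 1 + (μ * x - μ * y) ^ 2
  have hQ : 1 ≤ Q := by simp only [Q]; nlinarith
  have hdiff : x - y ≤ Q / (2 * μ) := by
    rw [le_div_iff₀ (by positivity)]
    nlinarith [sq_nonneg (μ * x - μ * y - 1)]
  have hB : 1 + y ≤ (1 + y) * Q := le_mul_of_one_le_right (by positivity) hQ
  have hBQ : Q / (2 * μ) ≤ (1 + y) * Q / (2 * μ) := by
    gcongr
    exact le_mul_of_one_le_left (by positivity) (by linarith)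
  calc 1 + x ≤ (1 + y) * Q + (1 + y) * Q / (2 * μ) := by linarith
    _ = _ := by ring

lemma f11_integrand_le {ℓ : ℕ} {μ c : ℝ} (hℓ : 2 ≤ ℓ) (hμ : 0 < μ) {G : ℝ → ℂ}
    (hG : ∀ p : ℝ, ‖G p‖ ≤ c / (1 + p ^ 2) ^ ℓ) (u v : ℝ) :
    cosh ((u - v) / 2) ^ 2 * ‖G (μ * cosh u - μ * cosh v)‖ ^ 2 * ((1 + cosh v) ^ (2 * ℓ))⁻¹ ≤
      (c * (1 + 1 / (2 * μ))) ^ 2 * ((1 + cosh u)⁻¹ * (1 + cosh v)⁻¹) := by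
  set D := μ * cosh u - μ * cosh v
  set A := 1 + cosh u
  set B := 1 + cosh v
  set Q := 1 + D ^ 2
  set K := 1 + 1 / (2 * μ)
  set g := ‖G D‖
  have hA : 0 < A := by linarith [one_le_cosh u]
  have hB : 1 ≤ B := by linarith [cosh_pos v]
  have hQ : 1 ≤ Q := by simp only [Q]; nlinarith
  have hAB : A * B ≤ K * (B ^ ℓ * Q ^ ℓ) :=
    calc A * B ≤ K * (B * Q) * B :=
          by gcongr; exact one_add_le_mul_one_add_mul_one_add_sq hμ (cosh_pos v).le
      _ = K * (B ^ 2 * Q) := by ring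
      _ ≤ K * (B ^ ℓ * Q ^ ℓ) := by
          gcongr
          exact le_self_pow₀ hQ (by omega)
  have hg : g * Q ^ ℓ ≤ c := (le_div_iff₀ (by positivity)).1 (hG D)
  calc cosh ((u - v) / 2) ^ 2 * g ^ 2 * (B ^ (2 * ℓ))⁻¹
      ≤ A * B * g ^ 2 * (B ^ (2 * ℓ))⁻¹ := by gcongr; exact cosh_half_sub_sq_le u v
    _ = (A * B) ^ 2 * g ^ 2 / (B ^ ℓ) ^ 2 / (A * B) := by field_simp; ring
    _ ≤ (K * (B ^ ℓ * Q ^ ℓ)) ^ 2 * g ^ 2 / (B ^ ℓ) ^ 2 / (A * B) := by gcongr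
    _ = (g * Q ^ ℓ * K) ^ 2 * (A⁻¹ * B⁻¹) := by field_simp
    _ ≤ (c * K) ^ 2 * (A⁻¹ * B⁻¹) := by gcongr

/-- ω-weighted square integrability of the coefficient `f_{1,1}(θ₁,θ₂) =
cosh((θ₁−θ₂)/2)·G(μ cosh θ₁ − μ cosh θ₂)` with weight `(1+cosh θ₂)^{−ℓ}`, for `ℓ`
sufficiently large. -/
theorem f11_weighted_square_integrable :
    ∃ ℓ₀ : ℕ, ∀ ℓ : ℕ, ℓ₀ ≤ ℓ → ∀ (μ c : ℝ), 0 < μ → 0 < c →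
      ∀ G : ℝ → ℂ, Measurable G →
      (∀ p : ℝ, ‖G p‖ ≤ c / (1 + p ^ 2) ^ ℓ) →
      Integrable (fun θ : ℝ × ℝ =>
        Real.cosh ((θ.1 - θ.2) / 2) ^ 2 *
          ‖G (μ * Real.cosh θ.1 - μ * Real.cosh θ.2)‖ ^ 2 *
          ((1 + Real.cosh θ.2) ^ (2 * ℓ))⁻¹) := by
  refine ⟨2, fun ℓ hℓ μ c hμ _ G hGmeas hG => ?_⟩
  have hdom : Integrable fun θ : ℝ × ℝ =>
      (c * (1 + 1 / (2 * μ))) ^ 2 * ((1 + cosh θ.1)⁻¹ * (1 + cosh θ.2)⁻¹) := by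
    rw [Measure.volume_eq_prod]
    exact (integrable_inv_one_add_cosh.mul_prod integrable_inv_one_add_cosh).const_mul _
  refine hdom.mono' (by fun_prop) (ae_of_all _ fun θ => ?_)
  rw [norm_of_nonneg (by positivity)]
  exact f11_integrand_le hℓ hμ hG θ.1 θ.2
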